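/- arXiv:2409.00188 — 4 statements merged into one kernel-verified Lean document; each statement's English description precedes it below -/
import Mathlib

section
/- Let W be a Jacobson scheme and let Z ⊆ W be a subset equipped with the subspace topology. Assume that for every point p ∈ Z which is closed in W one has dim_p Z < dim_p W, where dim_p denotes the local dimension at p (the infimum over open neighbourhoods U of p of the topological Krull dimension of U ∩ Z, respectively of U). Then the complement W \ Z is dense in W. -/
/-!
If `Z` had nonempty interior, that open set would contain a closed point `p` of the Jacobson
space `W`; but `Z` is a neighbourhood of `p`, so every neighbourhood of `p` in `W` shrinks to
one inside `Z`, forcing `dim_p W ≤ dim_p Z`.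
-/

open AlgebraicGeometry Topology

/-- The local dimension at `p` of a subset `S` of a topological space `T`: the infimum,
over open neighbourhoods `U` of `p`, of the topological Krull dimension of `U ∩ S`
(with the subspace topology). -/
noncomputable def localDimAt (T : Type*) [TopologicalSpace T] (S : Set T) (p : T) :
    WithBot ℕ∞ :=
  ⨅ U : {U : Set T // IsOpen U ∧ p ∈ U}, topologicalKrullDim ↥(U.1 ∩ S)

theorem localDimAt_univ_le_of_mem_nhds {T : Type*} [TopologicalSpace T] {S : Set T} {p : T}
    (hS : S ∈ 𝓝 p) : localDimAt T Set.univ p ≤ localDimAt T S p := by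
  refine le_iInf fun ⟨V, hV, hpV⟩ ↦ ?_
  obtain ⟨U, hUS, hU, hpU⟩ := mem_nhds_iff.mp hS
  have hsub : V ∩ U ∩ Set.univ ⊆ V ∩ S := fun x ⟨⟨hxV, hxU⟩, _⟩ ↦ ⟨hxV, hUS hxU⟩
  calc localDimAt T Set.univ p
      ≤ topologicalKrullDim ↥(V ∩ U ∩ Set.univ) :=
        iInf_le_of_le ⟨V ∩ U, hV.inter hU, hpV, hpU⟩ le_rfl
    _ ≤ topologicalKrullDim ↥(V ∩ S) :=
        (IsEmbedding.inclusion hsub).isInducing.topologicalKrullDim_le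

/-- Let `W` be a Jacobson scheme and `Z ⊆ W` a subset such that for every
point `p ∈ Z` which is closed in `W` we have `dim_p Z < dim_p W`. Then `W \ Z` is dense. -/
theorem dense_compl_of_localDim_lt
    (W : Scheme) [JacobsonSpace W] (Z : Set W)
    (h : ∀ p ∈ Z, IsClosed ({p} : Set W) →
      localDimAt W Z p < localDimAt W Set.univ p) :
    Dense Zᶜ := by
  rw [← interior_eq_empty_iff_dense_compl, ← Set.not_nonempty_iff_eq_empty]
  intro hne
  obtain ⟨p, hpZ, hpc⟩ := nonempty_inter_closedPoints hne isOpen_interior.isLocallyClosed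
  exact (h p (interior_subset hpZ) hpc).not_ge
    (localDimAt_univ_le_of_mem_nhds (mem_interior_iff_mem_nhds.mp hpZ))
end

section
/- Let K be a field and A a commutative K-algebra which is an integral domain. Assume that every zero divisor of the tensor product A ⊗_K A is nilpotent. Then K is separably closed in the fraction field Q of A: every element α ∈ Q which is algebraic and separable over K already lies in K. Consequently Spec A is geometrically irreducible over K. -/
/-!
Suppose `α ∈ Q = Frac A` is separable over `K` but not in `K`, and factor its minimal polynomial
over `Q` as `(X - α) g`. In `Q ⊗[K] Q ⊇ Q ⊗[K] K(α) ≅ Q[X]/(minpoly)`, the element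
`1 ⊗ α - α ⊗ 1` is killed by `g(1 ⊗ α) ≠ 0`, yet it is not nilpotent because the minimal
polynomial is squarefree of degree at least two. Clearing denominators turns it into a
non-nilpotent zero divisor of `A ⊗[K] A`.

Once `K` is separably closed in `Q`, every monic factor over `Q` of a separable `f ∈ K[X]` has
separable coefficients, which then lie in `K`; so minimal polynomials of separable elements stay
irreducible over `Q`. By the primitive element theorem `Q ⊗[K] M` is then a field for finite
separable `M / K`, hence `Kˢ ⊗[K] A ⊆ Kˢ ⊗[K] Q` is a domain for the separable closure `Kˢ`.
Finally `K̄ / Kˢ` is purely inseparable, so `Spec (K̄ ⊗[K] A) ≃ Spec (Kˢ ⊗[K] A)` is irreducible.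
-/

open TensorProduct Polynomial

theorem minpoly.two_le_natDegree {K Q : Type*} [Field K] [Ring Q] [Nontrivial Q] [Algebra K Q]
    {α : Q} (hα : IsIntegral K α) (hK : α ∉ (algebraMap K Q).range) :
    2 ≤ (minpoly K α).natDegree := by
  have := minpoly.natDegree_pos hα
  have : (minpoly K α).natDegree ≠ 1 := mt minpoly.natDegree_eq_one_iff.1 hK
  omega

section BaseChange

variable {K Q B : Type*} [Field K] [CommRing Q] [Algebra K Q] [CommRing B] [Algebra K B]

theorem aeval_one_tmul_map (θ : B) (p : K[X]) :
    aeval ((1 : Q) ⊗ₜ[K] θ) (p.map (algebraMap K Q)) = 1 ⊗ₜ aeval θ p := by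
  rw [aeval_map_algebraMap]
  exact aeval_algHom_apply Algebra.TensorProduct.includeRight θ p

theorem aeval_one_tmul_X_sub_C (α : Q) :
    aeval ((1 : Q) ⊗ₜ[K] α) (X - C α) = 1 ⊗ₜ α - α ⊗ₜ 1 := by
  simp [Algebra.TensorProduct.algebraMap_apply]

theorem eq_zero_of_aeval_one_tmul_eq_zero {θ : B} {p : Q[X]}
    (hdeg : p.natDegree < (minpoly K θ).natDegree) (hp : aeval ((1 : Q) ⊗ₜ[K] θ) p = 0) :
    p = 0 := by
  have hcoeff := Fintype.linearIndependent_iff.1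
    (Module.Flat.linearIndependent_one_tmul (S := Q) (linearIndependent_pow θ))
    (fun i => p.coeff i) (by
      rw [aeval_eq_sum_range' hdeg, ← Fin.sum_univ_eq_sum_range] at hp
      simpa [Algebra.TensorProduct.tmul_pow] using hp)
  ext i
  by_cases hi : i < (minpoly K θ).natDegree
  · exact hcoeff ⟨i, hi⟩
  · exact coeff_eq_zero_of_natDegree_lt (by omega)

theorem aeval_one_tmul_eq_zero_iff [Nontrivial Q] [Nontrivial B] {θ : B} (hθ : IsIntegral K θ)
    {p : Q[X]} :
    aeval ((1 : Q) ⊗ₜ[K] θ) p = 0 ↔ (minpoly K θ).map (algebraMap K Q) ∣ p := by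
  have hmonic : ((minpoly K θ).map (algebraMap K Q)).Monic := (minpoly.monic hθ).map _
  have hroot : aeval ((1 : Q) ⊗ₜ[K] θ) ((minpoly K θ).map (algebraMap K Q)) = 0 := by
    rw [aeval_one_tmul_map, minpoly.aeval, tmul_zero]
  refine ⟨fun hp => ?_, fun ⟨c, hc⟩ => by rw [hc, map_mul, hroot, zero_mul]⟩
  rw [← modByMonic_eq_zero_iff_dvd hmonic]
  refine eq_zero_of_aeval_one_tmul_eq_zero (K := K) (θ := θ) ?_ ?_
  · have hdeg : ((minpoly K θ).map (algebraMap K Q)).natDegree = (minpoly K θ).natDegree :=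
      natDegree_map _
    rw [← hdeg]
    refine natDegree_modByMonic_lt _ hmonic fun h => ?_
    have := minpoly.natDegree_pos hθ
    rw [h, natDegree_one] at hdeg
    omega
  · rw [modByMonic_eq_sub_mul_div, map_sub, map_mul, hp, hroot, zero_mul, sub_zero]

end BaseChange

section SeparablyClosed

variable {K Q : Type*} [Field K] [Field Q] [Algebra K Q]

theorem one_tmul_sub_tmul_one_notMem_nonZeroDivisors {α : Q} (hα : IsIntegral K α)
    (hK : α ∉ (algebraMap K Q).range) :
    (1 : Q) ⊗ₜ[K] α - α ⊗ₜ[K] 1 ∉ nonZeroDivisors (Q ⊗[K] Q) := by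
  set g := (minpoly K α).map (algebraMap K Q) /ₘ (X - C α)
  have hfactor : (X - C α) * g = (minpoly K α).map (algebraMap K Q) :=
    mul_divByMonic_eq_iff_isRoot.2 (by simp [eval_map, ← aeval_def])
  have h2 := minpoly.two_le_natDegree hα hK
  have hdeg : g.natDegree + 1 = (minpoly K α).natDegree := by
    rw [natDegree_divByMonic _ (monic_X_sub_C α), natDegree_map, natDegree_X_sub_C]
    omega
  rw [mem_nonZeroDivisors_iff_right]
  push Not
  refine ⟨aeval ((1 : Q) ⊗ₜ[K] α) g, ?_, ?_⟩
  · rw [← aeval_one_tmul_X_sub_C, ← map_mul, mul_comm, hfactor, aeval_one_tmul_map,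
      minpoly.aeval, tmul_zero]
  · rw [Ne, aeval_one_tmul_eq_zero_iff hα]
    intro hdvd
    have := natDegree_le_of_dvd hdvd (ne_zero_of_natDegree_gt (n := 0) (by omega))
    rw [natDegree_map] at this
    omega

theorem not_isNilpotent_one_tmul_sub_tmul_one {α : Q} (hα : IsSeparable K α)
    (hK : α ∉ (algebraMap K Q).range) :
    ¬IsNilpotent ((1 : Q) ⊗ₜ[K] α - α ⊗ₜ[K] 1) := by
  rintro ⟨m, hm⟩
  have hdvd : (minpoly K α).map (algebraMap K Q) ∣ (X - C α) ^ (m + 1) := by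
    rw [← aeval_one_tmul_eq_zero_iff hα.isIntegral, map_pow, aeval_one_tmul_X_sub_C, pow_succ,
      hm, zero_mul]
  rw [(Separable.map hα).squarefree.dvd_pow_iff_dvd m.succ_ne_zero] at hdvd
  have := natDegree_le_of_dvd hdvd (X_sub_C_ne_zero α)
  rw [natDegree_map, natDegree_X_sub_C] at this
  have := minpoly.two_le_natDegree hα.isIntegral hK
  omega

end SeparablyClosed

theorem isNilpotent_of_notMem_nonZeroDivisors_of_injective {R S : Type*} [CommRing R]
    [CommRing S] (f : R →+* S) (hf : Function.Injective f)
    (hfS : ∀ s : S, ∃ r u, IsUnit u ∧ f r = u * s)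
    (hR : ∀ z : R, z ∉ nonZeroDivisors R → IsNilpotent z) {s : S}
    (hs : s ∉ nonZeroDivisors S) : IsNilpotent s := by
  rw [mem_nonZeroDivisors_iff_right] at hs
  push Not at hs
  obtain ⟨t, hts, ht⟩ := hs
  obtain ⟨r, u, hu, hr⟩ := hfS s
  obtain ⟨r', u', hu', hr'⟩ := hfS t
  have hr_zd : r ∉ nonZeroDivisors R := by
    rw [mem_nonZeroDivisors_iff_right]
    push Not
    refine ⟨r', hf ?_, ?_⟩
    · rw [map_mul, hr, hr', map_zero, mul_mul_mul_comm, hts, mul_zero]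
    · rintro rfl
      rw [map_zero, eq_comm, hu'.mul_right_eq_zero] at hr'
      exact ht hr'
  rw [← hu.isNilpotent_unit_mul_of_commute_iff (Commute.all _ _), ← hr]
  exact (hR r hr_zd).map f

theorem exists_map_eq_mul_of_isLocalization {K R S R' S' : Type*} [CommRing K] [CommRing R]
    [CommRing S] [CommRing R'] [CommRing S'] [Algebra K R] [Algebra K S] [Algebra K R']
    [Algebra K S'] [Algebra R R'] [Algebra S S'] [IsScalarTower K R R'] [IsScalarTower K S S']
    (M : Submonoid R) (N : Submonoid S) [IsLocalization M R'] [IsLocalization N S']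
    (u : R' ⊗[K] S') :
    ∃ z w : R ⊗[K] S,
      IsUnit (Algebra.TensorProduct.map (IsScalarTower.toAlgHom K R R')
        (IsScalarTower.toAlgHom K S S') w) ∧
      Algebra.TensorProduct.map (IsScalarTower.toAlgHom K R R')
        (IsScalarTower.toAlgHom K S S') z =
      Algebra.TensorProduct.map (IsScalarTower.toAlgHom K R R')
        (IsScalarTower.toAlgHom K S S') w * u := by
  induction u using TensorProduct.induction_on with
  | zero => exact ⟨0, 1, by simp, by simp⟩
  | tmul r' s' =>
    obtain ⟨⟨a, m⟩, ha⟩ := IsLocalization.surj M r'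
    obtain ⟨⟨b, n⟩, hb⟩ := IsLocalization.surj N s'
    refine ⟨a ⊗ₜ b, (m : R) ⊗ₜ (n : S), ?_, ?_⟩
    · rw [Algebra.TensorProduct.map_tmul, IsScalarTower.coe_toAlgHom',
        IsScalarTower.coe_toAlgHom', ← mul_one (algebraMap R R' m), ← one_mul (algebraMap S S' n),
        ← Algebra.TensorProduct.tmul_mul_tmul]
      exact ((IsLocalization.map_units R' m).map
        (Algebra.TensorProduct.includeLeft (R := K) (S := K) (B := S'))).mul
          ((IsLocalization.map_units S' n).map (Algebra.TensorProduct.includeRight (R := K)))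
    · simp [Algebra.TensorProduct.tmul_mul_tmul, ← ha, ← hb, mul_comm]
  | add x y hx hy =>
    obtain ⟨z₁, w₁, hw₁, h₁⟩ := hx
    obtain ⟨z₂, w₂, hw₂, h₂⟩ := hy
    refine ⟨w₂ * z₁ + w₁ * z₂, w₁ * w₂, by simpa using hw₁.mul hw₂, ?_⟩
    simp only [map_add, map_mul, h₁, h₂]
    ring

theorem separableClosure_fractionRing_eq_bot_of_forall_isNilpotent {K A : Type*} [Field K]
    [CommRing A] [IsDomain A] [Algebra K A]
    (h : ∀ z : A ⊗[K] A, z ∉ nonZeroDivisors (A ⊗[K] A) → IsNilpotent z) :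
    separableClosure K (FractionRing A) = ⊥ := by
  refine eq_bot_iff.2 fun α hα => by_contra fun hK => ?_
  rw [IntermediateField.mem_bot] at hK
  refine not_isNilpotent_one_tmul_sub_tmul_one hα hK ?_
  refine isNilpotent_of_notMem_nonZeroDivisors_of_injective
    (Algebra.TensorProduct.map (IsScalarTower.toAlgHom K A (FractionRing A))
      (IsScalarTower.toAlgHom K A (FractionRing A))).toRingHom ?_ (fun s => ?_) h
    (one_tmul_sub_tmul_one_notMem_nonZeroDivisors hα.isIntegral hK)
  · exact TensorProduct.map_injective_of_flat_flat _ _ (IsFractionRing.injective A _)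
      (IsFractionRing.injective A _)
  · obtain ⟨z, w, hw, hz⟩ := exists_map_eq_mul_of_isLocalization (nonZeroDivisors A)
      (nonZeroDivisors A) s
    exact ⟨z, _, hw, hz⟩

section SeparableBaseChange

variable {K Q : Type*} [Field K] [Field Q] [Algebra K Q]

theorem Polynomial.isSeparable_coeff_of_dvd {p : K[X]} (hp : p.Separable) {q : Q[X]}
    (hq : q.Monic) (H : q ∣ p.map (algebraMap K Q)) (i : ℕ) : IsSeparable K (q.coeff i) := by
  let E := AlgebraicClosure Q
  have hroots : ∀ a ∈ (q.map (algebraMap Q E)).roots, IsSeparable K a := by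
    intro a ha
    rw [mem_roots_map_of_injective (p := q) (algebraMap Q E).injective hq.ne_zero, ← aeval_def]
      at ha
    have hpa : aeval a p = 0 := by
      rw [← aeval_map_algebraMap Q]
      exact aeval_eq_zero_of_dvd_aeval_eq_zero H ha
    exact hp.of_dvd (minpoly.dvd K a hpa)
  have hlifts : q.map (algebraMap Q E) ∈ lifts (algebraMap (separableClosure K E) E) := by
    rw [(IsAlgClosed.splits _).eq_prod_roots_of_monic (hq.map _)]
    refine Subsemiring.multiset_prod_mem _ _ fun r hr => ?_
    obtain ⟨a, ha, rfl⟩ := Multiset.mem_map.1 hr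
    exact ⟨X - C ⟨a, hroots a ha⟩, by simp⟩
  obtain ⟨c, hc⟩ := (lifts_iff_coeff_lifts _).1 hlifts i
  rw [← isSeparable_map_iff (IsScalarTower.toAlgHom K Q E) (algebraMap Q E).injective,
    IsScalarTower.coe_toAlgHom', ← coeff_map, ← hc]
  exact c.2

theorem irreducible_map_minpoly_of_separableClosure_eq_bot (hQ : separableClosure K Q = ⊥)
    {M : Type*} [Field M] [Algebra K M] {θ : M} (hθ : IsSeparable K θ) :
    Irreducible ((minpoly K θ).map (algebraMap K Q)) := by
  have hint := hθ.isIntegral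
  obtain ⟨g, hg_monic, hg_irr, hg_dvd⟩ := exists_monic_irreducible_factor
    ((minpoly K θ).map (algebraMap K Q))
    (not_isUnit_of_natDegree_pos _ (by rw [natDegree_map]; exact minpoly.natDegree_pos hint))
  have hcoeff (i : ℕ) : g.coeff i ∈ Set.range (algebraMap K Q) :=
    IntermediateField.mem_bot.1 (hQ ▸ isSeparable_coeff_of_dvd hθ hg_monic hg_dvd i)
  obtain ⟨g₀, rfl, -, hg₀_monic⟩ :=
    lifts_and_natDegree_eq_and_monic ((lifts_iff_coeff_lifts g).2 hcoeff) hg_monic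
  have hdvd : g₀ ∣ minpoly K θ := (map_dvd_map _ (algebraMap K Q).injective hg₀_monic).1 hg_dvd
  rwa [eq_of_monic_of_associated hg₀_monic (minpoly.monic hint)
    ((hg₀_monic.irreducible_of_irreducible_map _ _ hg_irr).associated_of_dvd
      (minpoly.irreducible hint) hdvd)] at hg_irr

theorem isDomain_tensorProduct_of_finiteDimensional (hQ : separableClosure K Q = ⊥)
    (M : Type*) [Field M] [Algebra K M] [FiniteDimensional K M] [Algebra.IsSeparable K M] :
    IsDomain (Q ⊗[K] M) := by
  obtain ⟨θ, hθ⟩ := Field.exists_primitive_element K M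
  have hint : IsIntegral K θ := .of_finite K θ
  have hsurj : Function.Surjective (aeval (R := Q) ((1 : Q) ⊗ₜ[K] θ)) := by
    rw [← AlgHom.range_eq_top, ← Algebra.adjoin_singleton_eq_range_aeval, ← Set.image_singleton]
    refine Algebra.TensorProduct.adjoin_one_tmul_image_eq_top _ ?_
    rw [← IntermediateField.adjoin_simple_toSubalgebra_of_isAlgebraic hint.isAlgebraic, hθ,
      IntermediateField.top_toSubalgebra]
  have hker : RingHom.ker (aeval (R := Q) ((1 : Q) ⊗ₜ[K] θ)) =
      Ideal.span {(minpoly K θ).map (algebraMap K Q)} := by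
    ext p
    rw [RingHom.mem_ker, Ideal.mem_span_singleton, aeval_one_tmul_eq_zero_iff hint]
  have : (RingHom.ker (aeval (R := Q) ((1 : Q) ⊗ₜ[K] θ))).IsPrime := by
    rw [hker, Ideal.span_singleton_prime ((minpoly.monic hint).map _).ne_zero]
    exact (irreducible_map_minpoly_of_separableClosure_eq_bot hQ
      (Algebra.IsSeparable.isSeparable K θ)).prime
  exact (Ideal.quotientKerAlgEquivOfSurjective hsurj).symm.toMulEquiv.isDomain _

theorem exists_finset_forall_mem_range_map {R : Type*} [CommRing R] [Algebra K R]
    {F : Type*} [Field F] [Algebra K F] (u : R ⊗[K] F) :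
    ∃ s : Finset F, ∀ L : IntermediateField K F, (s : Set F) ⊆ L →
      u ∈ (Algebra.TensorProduct.map (AlgHom.id K R) L.val).range := by
  classical
  induction u using TensorProduct.induction_on with
  | zero => exact ⟨∅, fun L _ => zero_mem _⟩
  | tmul r x =>
    exact ⟨{x}, fun L hL => ⟨r ⊗ₜ ⟨x, hL (by simp)⟩, by simp⟩⟩
  | add u v hu hv =>
    obtain ⟨s, hs⟩ := hu
    obtain ⟨t, ht⟩ := hv
    refine ⟨s ∪ t, fun L hL => add_mem (hs L ?_) (ht L ?_)⟩ <;>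
      exact subset_trans (by simp) hL

theorem isDomain_tensorProduct_of_isSeparable (hQ : separableClosure K Q = ⊥)
    (F : Type*) [Field F] [Algebra K F] [Algebra.IsSeparable K F] : IsDomain (Q ⊗[K] F) := by
  classical
  refine @NoZeroDivisors.to_isDomain _ _ _ ⟨fun {u v} huv => ?_⟩
  obtain ⟨s, hs⟩ := exists_finset_forall_mem_range_map u
  obtain ⟨t, ht⟩ := exists_finset_forall_mem_range_map v
  let L := IntermediateField.adjoin K ((s ∪ t : Finset F) : Set F)
  have : FiniteDimensional K L := IntermediateField.finiteDimensional_adjoin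
    fun x _ => Algebra.IsSeparable.isIntegral K x
  have := isDomain_tensorProduct_of_finiteDimensional hQ L
  have hsub : ((s ∪ t : Finset F) : Set F) ⊆ L := IntermediateField.subset_adjoin K _
  obtain ⟨u', rfl⟩ := (AlgHom.mem_range _).1 (hs L (subset_trans (by simp) hsub))
  obtain ⟨v', rfl⟩ := (AlgHom.mem_range _).1 (ht L (subset_trans (by simp) hsub))
  have hinj : Function.Injective (Algebra.TensorProduct.map (AlgHom.id K Q) L.val) :=
    TensorProduct.map_injective_of_flat_flat _ _ (fun _ _ h => h) L.val.injective
  rw [← map_mul, map_eq_zero_iff _ hinj, mul_eq_zero] at huv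
  exact huv.imp (fun h => by rw [h, map_zero]) (fun h => by rw [h, map_zero])

end SeparableBaseChange

theorem isDomain_tensorProduct_of_separableClosure_fractionRing_eq_bot {K A : Type*} [Field K]
    [CommRing A] [IsDomain A] [Algebra K A] (hA : separableClosure K (FractionRing A) = ⊥)
    (F : Type*) [Field F] [Algebra K F] [Algebra.IsSeparable K F] : IsDomain (F ⊗[K] A) := by
  have := isDomain_tensorProduct_of_isSeparable hA F
  refine Function.Injective.isDomain
    ((Algebra.TensorProduct.comm K F (FractionRing A)).toAlgHom.comp
      (Algebra.TensorProduct.map (AlgHom.id K F) (IsScalarTower.toAlgHom K A (FractionRing A)))) ?_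
  exact (Algebra.TensorProduct.comm K F _).injective.comp
    (TensorProduct.map_injective_of_flat_flat _ _ (fun _ _ h => h) (IsFractionRing.injective A _))

/-- Let `K` be a field and `A` a commutative `K`-algebra which is an
integral domain, such that every zero divisor of `A ⊗[K] A` is nilpotent. Then `K` is
separably closed in the fraction field `Q` of `A` (every element of `Q` separable
algebraic over `K` lies in `K`), and consequently `Spec A` is geometrically irreducible
over `K`, i.e. `Spec (K̄ ⊗[K] A)` is irreducible for an algebraic closure `K̄` of `K`. -/
theorem separablyClosed_and_geometricallyIrreducible
    (K : Type*) [Field K] (A : Type*) [CommRing A] [IsDomain A] [Algebra K A]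
    (h : ∀ z : A ⊗[K] A, z ∉ nonZeroDivisors (A ⊗[K] A) → IsNilpotent z) :
    (∀ α : FractionRing A, IsAlgebraic K α → IsSeparable K α →
        α ∈ (algebraMap K (FractionRing A)).range) ∧
      IrreducibleSpace (PrimeSpectrum (AlgebraicClosure K ⊗[K] A)) := by
  have hA := separableClosure_fractionRing_eq_bot_of_forall_isNilpotent h
  refine ⟨fun α _ hα => IntermediateField.mem_bot.1 (hA ▸ hα), ?_⟩
  let Ks := separableClosure K (AlgebraicClosure K)
  have := isDomain_tensorProduct_of_separableClosure_fractionRing_eq_bot hA Ks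
  exact ((PrimeSpectrum.isHomeomorph_comap_tensorProductMap_of_isPurelyInseparable Ks K A
    (AlgebraicClosure K)).homeomorph _).irreducibleSpace_iff.2 inferInstance
end

section
/- Let A_1, …, A_m ⊆ ℤ^n be non-empty finite subsets and for non-empty J ⊆ {1,…,m} set D(J) := dim(Σ_{j∈J} A_j), where the sum is Minkowski sum. Then D is submodular: for all non-empty J, J' ⊆ {1,…,m} with J ∩ J' non-empty, D(J ∪ J') + D(J ∩ J') ≤ D(J) + D(J'). In particular, for the defect δ(J) := D(J) − |J| one has δ(J ∪ J') ≤ δ(J) + δ(J') − δ(J ∩ J'). -/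
/-- The dimension of a subset `B` of the lattice `ℤ^n`: the rank of the subgroup
generated by the differences `B − B`. -/
noncomputable def latticeDim {n : ℕ} (B : Set (Fin n → ℤ)) : ℕ :=
  Module.finrank ℤ (Submodule.span ℤ {v | ∃ a ∈ B, ∃ b ∈ B, v = a - b})

/-- The Minkowski sum `Σ_{j ∈ J} A j` of part of a family of subsets of `ℤ^n`. -/
def minkowskiSumOn {n m : ℕ} (A : Fin m → Set (Fin n → ℤ)) (J : Finset (Fin m)) :
    Set (Fin n → ℤ) :=
  {v | ∃ g : Fin m → (Fin n → ℤ), (∀ j ∈ J, g j ∈ A j) ∧ v = ∑ j ∈ J, g j}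

lemma spanDiff_minkowski {n m : ℕ} (A : Fin m → Finset (Fin n → ℤ)) (hA : ∀ i, (A i).Nonempty)
    (J : Finset (Fin m)) :
    Submodule.span ℤ {v | ∃ a ∈ minkowskiSumOn (fun i => (A i : Set (Fin n → ℤ))) J,
        ∃ b ∈ minkowskiSumOn (fun i => (A i : Set (Fin n → ℤ))) J, v = a - b}
      = J.sup (fun j => Submodule.span ℤ
          {v | ∃ a ∈ (A j : Set (Fin n → ℤ)), ∃ b ∈ (A j : Set (Fin n → ℤ)), v = a - b}) := by
  apply le_antisymm
  · rw [Submodule.span_le]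
    rintro v ⟨a, ⟨g, hg, rfl⟩, b, ⟨h, hh, rfl⟩, rfl⟩
    rw [← Finset.sum_sub_distrib]
    exact Submodule.sum_mem _ fun j hj => Finset.le_sup (f := fun j => Submodule.span ℤ
      {v | ∃ a ∈ (A j : Set (Fin n → ℤ)), ∃ b ∈ (A j : Set (Fin n → ℤ)), v = a - b}) hj
      (Submodule.subset_span ⟨g j, hg j hj, h j, hh j hj, rfl⟩)
  · apply Finset.sup_le
    intro j hj
    rw [Submodule.span_le]
    rintro v ⟨a, ha, b, hb, rfl⟩
    set c : Fin m → (Fin n → ℤ) := fun i => (hA i).choose with hc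
    have hcmem : ∀ i, c i ∈ A i := fun i => (hA i).choose_spec
    apply Submodule.subset_span
    refine ⟨∑ i ∈ J, Function.update c j a i,
      ⟨Function.update c j a, fun i hi => ?_, rfl⟩,
      ∑ i ∈ J, Function.update c j b i,
      ⟨Function.update c j b, fun i hi => ?_, rfl⟩, ?_⟩
    · rcases eq_or_ne i j with rfl | hne
      · simpa using ha
      · simpa [Function.update_of_ne hne] using hcmem i
    · rcases eq_or_ne i j with rfl | hne
      · simpa using hb
      · simpa [Function.update_of_ne hne] using hcmem i
    · rw [Finset.sum_update_of_mem hj, Finset.sum_update_of_mem hj]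
      abel

/-- **submodularity of the dimension of Minkowski sums.** For non-empty
finite subsets `A_1, …, A_m ⊆ ℤ^n` let `D(J) := dim Σ_{j ∈ J} A_j`. Then for non-empty
`J, J'` with non-empty intersection, `D(J ∪ J') + D(J ∩ J') ≤ D(J) + D(J')`; in
particular, for the (integer-valued) defect `δ(J) := D(J) − |J|` one has
`δ(J ∪ J') ≤ δ(J) + δ(J') − δ(J ∩ J')`. -/
theorem latticeDim_minkowski_submodular
    (n m : ℕ) (A : Fin m → Finset (Fin n → ℤ)) (hA : ∀ i, (A i).Nonempty)
    (J J' : Finset (Fin m)) (hJ : J.Nonempty) (hJ' : J'.Nonempty)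
    (hJJ' : (J ∩ J').Nonempty) :
    (latticeDim (minkowskiSumOn (fun i => (A i : Set (Fin n → ℤ))) (J ∪ J'))
        + latticeDim (minkowskiSumOn (fun i => (A i : Set (Fin n → ℤ))) (J ∩ J'))
      ≤ latticeDim (minkowskiSumOn (fun i => (A i : Set (Fin n → ℤ))) J)
        + latticeDim (minkowskiSumOn (fun i => (A i : Set (Fin n → ℤ))) J')) ∧
    ((latticeDim (minkowskiSumOn (fun i => (A i : Set (Fin n → ℤ))) (J ∪ J')) : ℤ)
        - (J ∪ J').card
      ≤ ((latticeDim (minkowskiSumOn (fun i => (A i : Set (Fin n → ℤ))) J) : ℤ)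
          - J.card)
        + ((latticeDim (minkowskiSumOn (fun i => (A i : Set (Fin n → ℤ))) J') : ℤ)
          - J'.card)
        - ((latticeDim (minkowskiSumOn (fun i => (A i : Set (Fin n → ℤ))) (J ∩ J')) : ℤ)
          - (J ∩ J').card)) := by
  set D : Fin m → Submodule ℤ (Fin n → ℤ) := fun j => Submodule.span ℤ
    {v | ∃ a ∈ (A j : Set (Fin n → ℤ)), ∃ b ∈ (A j : Set (Fin n → ℤ)), v = a - b} with hD
  have key : ∀ K : Finset (Fin m),
      latticeDim (minkowskiSumOn (fun i => (A i : Set (Fin n → ℤ))) K)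
        = Module.finrank ℤ ↥(K.sup D) := by
    intro K
    unfold latticeDim
    rw [spanDiff_minkowski A hA]
  have hsup : (J ∪ J').sup D = J.sup D ⊔ J'.sup D := Finset.sup_union
  have hinf : (J ∩ J').sup D ≤ J.sup D ⊓ J'.sup D :=
    le_inf (Finset.sup_mono Finset.inter_subset_left)
      (Finset.sup_mono Finset.inter_subset_right)
  have hrank : Module.rank ℤ ↥((J ∪ J').sup D) + Module.rank ℤ ↥((J ∩ J').sup D)
      ≤ Module.rank ℤ ↥(J.sup D) + Module.rank ℤ ↥(J'.sup D) := by
    calc Module.rank ℤ ↥((J ∪ J').sup D) + Module.rank ℤ ↥((J ∩ J').sup D)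
        ≤ Module.rank ℤ ↥(J.sup D ⊔ J'.sup D)
          + Module.rank ℤ ↥(J.sup D ⊓ J'.sup D) := by
          gcongr
          · exact Submodule.rank_mono hsup.le
          · exact Submodule.rank_mono hinf
      _ = Module.rank ℤ ↥(J.sup D) + Module.rank ℤ ↥(J'.sup D) :=
          Submodule.rank_sup_add_rank_inf_eq _ _
  have hfr : ∀ K : Finset (Fin m),
      (Module.finrank ℤ ↥(K.sup D) : Cardinal) = Module.rank ℤ ↥(K.sup D) := fun K =>
    Module.finrank_eq_rank ℤ ↥(K.sup D)
  have main : latticeDim (minkowskiSumOn (fun i => (A i : Set (Fin n → ℤ))) (J ∪ J'))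
        + latticeDim (minkowskiSumOn (fun i => (A i : Set (Fin n → ℤ))) (J ∩ J'))
      ≤ latticeDim (minkowskiSumOn (fun i => (A i : Set (Fin n → ℤ))) J)
        + latticeDim (minkowskiSumOn (fun i => (A i : Set (Fin n → ℤ))) J') := by
    rw [key, key, key, key]
    have : ((Module.finrank ℤ ↥((J ∪ J').sup D) + Module.finrank ℤ ↥((J ∩ J').sup D) : ℕ)
        : Cardinal) ≤ ((Module.finrank ℤ ↥(J.sup D) + Module.finrank ℤ ↥(J'.sup D) : ℕ)
        : Cardinal) := by
      push_cast
      rw [hfr, hfr, hfr, hfr]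
      exact hrank
    exact_mod_cast this
  refine ⟨main, ?_⟩
  have hcard : (J ∪ J').card + (J ∩ J').card = J.card + J'.card :=
    Finset.card_union_add_card_inter J J'
  push_cast
  omega
end

section
/- Let k be a field, A ⊆ ℤ^n a finite subset, c_1, …, c_d ∈ k^A Laurent polynomials, λ⃗_1, …, λ⃗_{d−1} ∈ k^d vectors (λ⃗_j = (λ_{j1}, …, λ_{jd})), and Δ_d ⊆ A a subset. For λ⃗ ∈ k^d set Δ_{λ⃗} := { χ ∈ A : c_i[χ] = λ_i for all 1 ≤ i ≤ d }. Assume the (d−1)×(d−1) matrix Λ with entries Λ_{st} = λ_{t,s} (1 ≤ s, t ≤ d−1) is non-degenerate, and that for every χ ∈ Δ_d the d×d matrix Λ_χ, obtained from Λ by appending the column (c_1[χ], …, c_{d−1}[χ]) and the row (λ_{1,d}, …, λ_{d−1,d}, c_d[χ]), is non-degenerate. Then there is an invertible linear transformation of k^d mapping (c_1, …, c_d) to polynomials (ĉ_1, …, ĉ_d) that are adjusted to Δ_{λ⃗_1}, …, Δ_{λ⃗_{d−1}}, Δ_d. -/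
/-- **adjusting fibres.** Let `k` be a field, `A ⊆ ℤ^n` finite,
`c_1, …, c_d ∈ k^A`, `λ⃗_1, …, λ⃗_{d−1} ∈ k^d` and `Δ_d ⊆ A`. For `λ⃗ ∈ k^d` put
`Δ_{λ⃗} = {χ ∈ A | c_i[χ] = λ_i ∀ i}`. If the `(d−1) × (d−1)` matrix `Λ` with entries
`Λ_{s,t} = λ_{t,s}` is non-degenerate, and for every `χ ∈ Δ_d` the `d × d` matrix `Λ_χ`
(obtained by appending the column `(c_1[χ], …, c_{d−1}[χ])ᵀ` and the row
`(λ_{1,d}, …, λ_{d−1,d}, c_d[χ])`) is non-degenerate, then some invertible linear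
transformation of `k^d` maps `(c_1, …, c_d)` to a tuple `(ĉ_1, …, ĉ_d)` adjusted to
`Δ_{λ⃗_1}, …, Δ_{λ⃗_{d−1}}, Δ_d`. -/
theorem adjusting_fibres
    (k : Type*) [Field k] (n d : ℕ) (A : Finset (Fin n → ℤ))
    (c : Fin d → (↥A → k)) (lam : Fin (d - 1) → Fin d → k)
    (Δd : Finset (Fin n → ℤ)) (hΔd : Δd ⊆ A)
    (hΛ : (Matrix.of fun s t : Fin (d - 1) =>
        lam t (Fin.castLE (Nat.sub_le d 1) s)).det ≠ 0)
    (hΛχ : ∀ χ, ∀ hχ : χ ∈ Δd,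
      (Matrix.of fun s t : Fin d =>
        if h : (t : ℕ) < d - 1 then lam ⟨t, h⟩ s else c s ⟨χ, hΔd hχ⟩).det ≠ 0) :
    ∃ T : Matrix (Fin d) (Fin d) k, IsUnit T.det ∧
      -- the transformed tuple `ĉ_i = Σ_j T_{ij} c_j` is adjusted to the subsets
      -- `Δ_{λ⃗_1}, …, Δ_{λ⃗_{d−1}}, Δ_d` :
      (∀ j : Fin d, ∀ χ : ↥A,
        χ ∈ (if h : (j : ℕ) < d - 1
              then {χ : ↥A | ∀ i : Fin d, c i χ = lam ⟨j, h⟩ i}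
              else {χ : ↥A | (χ : Fin n → ℤ) ∈ Δd}) →
          (∑ j' : Fin d, T j j' * c j' χ) ≠ 0) ∧
      (∀ j j' : Fin d, j' < j → ∀ χ : ↥A,
        χ ∈ (if h : (j' : ℕ) < d - 1
              then {χ : ↥A | ∀ i : Fin d, c i χ = lam ⟨j', h⟩ i}
              else {χ : ↥A | (χ : Fin n → ℤ) ∈ Δd}) →
          (∑ j'' : Fin d, T j j'' * c j'' χ) = 0) := by
  cases d with
  | zero => exact ⟨1, by simp, fun j => j.elim0, fun j => j.elim0⟩
  | succ m =>
  set B : Matrix (Fin (m + 1)) (Fin (m + 1)) k :=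
    Matrix.of (fun s t => if h : (t : ℕ) < m + 1 - 1 then lam ⟨t, h⟩ s
      else if s = Fin.last m then 1 else 0) with hBdef
  -- determinant of B via block decomposition
  have hBsub : B.submatrix (finSumFinEquiv (m := m) (n := 1))
      (finSumFinEquiv (m := m) (n := 1)) =
      Matrix.fromBlocks
        ((Matrix.of fun s t : Fin (m + 1 - 1) => lam t (Fin.castLE (Nat.sub_le (m+1) 1) s) :
            Matrix (Fin (m+1-1)) (Fin (m+1-1)) k) : Matrix (Fin m) (Fin m) k)
        (0 : Matrix (Fin m) (Fin 1) k)
        (Matrix.of fun (_ : Fin 1) (t : Fin m) => lam ⟨t, by omega⟩ (Fin.last m))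
        (1 : Matrix (Fin 1) (Fin 1) k) := by
    ext i j
    rcases i with s | s <;> rcases j with t | t
    · have ht : ((Fin.castAdd 1 t : Fin (m+1)) : ℕ) < m + 1 - 1 := by
        simp only [Fin.coe_castAdd]; omega
      simp only [Matrix.submatrix_apply, finSumFinEquiv_apply_left, hBdef,
        Matrix.of_apply, Matrix.fromBlocks_apply₁₁]
      rw [dif_pos ht]
      rfl
    · have ht : ¬ ((Fin.natAdd m t : Fin (m+1)) : ℕ) < m + 1 - 1 := by
        simp only [Fin.coe_natAdd]; omega
      have hs : (Fin.castAdd 1 s : Fin (m+1)) ≠ Fin.last m := by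
        simp only [ne_eq, Fin.ext_iff, Fin.coe_castAdd, Fin.val_last]
        omega
      simp only [Matrix.submatrix_apply, finSumFinEquiv_apply_left,
        finSumFinEquiv_apply_right, hBdef, Matrix.of_apply,
        Matrix.fromBlocks_apply₁₂, Matrix.zero_apply]
      rw [dif_neg ht, if_neg hs]
    · have ht : ((Fin.castAdd 1 t : Fin (m+1)) : ℕ) < m + 1 - 1 := by
        simp only [Fin.coe_castAdd]; omega
      have hs : (Fin.natAdd m s : Fin (m+1)) = Fin.last m := by
        apply Fin.ext
        simp only [Fin.coe_natAdd, Fin.val_last]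
        omega
      simp only [Matrix.submatrix_apply, finSumFinEquiv_apply_left,
        finSumFinEquiv_apply_right, hBdef, Matrix.of_apply, Matrix.fromBlocks_apply₂₁]
      rw [dif_pos ht, hs]
      rfl
    · have ht : ¬ ((Fin.natAdd m t : Fin (m+1)) : ℕ) < m + 1 - 1 := by
        simp only [Fin.coe_natAdd]; omega
      have hs : (Fin.natAdd m s : Fin (m+1)) = Fin.last m := by
        apply Fin.ext
        simp only [Fin.coe_natAdd, Fin.val_last]
        omega
      simp only [Matrix.submatrix_apply, finSumFinEquiv_apply_right, hBdef,
        Matrix.of_apply, Matrix.fromBlocks_apply₂₂]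
      rw [dif_neg ht, if_pos hs, Subsingleton.elim t s, Matrix.one_apply_eq]
  have hBdet : B.det ≠ 0 := by
    rw [← Matrix.det_submatrix_equiv_self (finSumFinEquiv (m := m) (n := 1)) B, hBsub,
      Matrix.det_fromBlocks_zero₁₂, Matrix.det_one, mul_one]
    exact hΛ
  have hU : IsUnit B.det := isUnit_iff_ne_zero.2 hBdet
  have hTB : B⁻¹ * B = 1 := Matrix.nonsing_inv_mul B hU
  refine ⟨B⁻¹, B.isUnit_nonsing_inv_det hU, ?_, ?_⟩
  · intro j χ hχ
    by_cases h : (j : ℕ) < m + 1 - 1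
    · rw [dif_pos h] at hχ
      simp only [Set.mem_setOf_eq] at hχ
      have hsum : (∑ j' : Fin (m+1), B⁻¹ j j' * c j' χ) = (B⁻¹ * B) j j := by
        rw [Matrix.mul_apply]
        refine Finset.sum_congr rfl fun i _ => ?_
        rw [hχ i, hBdef]
        simp only [Matrix.of_apply, dif_pos h]
      rw [hsum, hTB, Matrix.one_apply_eq]
      exact one_ne_zero
    · rw [dif_neg h] at hχ
      simp only [Set.mem_setOf_eq] at hχ
      set v : Fin (m+1) → k := fun i => c i χ with hv
      have hcr : Matrix.cramer B v (Fin.last m) ≠ 0 := by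
        rw [Matrix.cramer_apply]
        have hupd : B.updateCol (Fin.last m) v =
            Matrix.of (fun s t : Fin (m+1) =>
              if h : (t : ℕ) < m + 1 - 1 then lam ⟨t, h⟩ s else c s ⟨↑χ, hΔd hχ⟩) := by
          ext s t
          by_cases ht : (t : ℕ) < m + 1 - 1
          · have ht' : t ≠ Fin.last m := by
              intro h'; rw [h'] at ht; simp only [Fin.val_last] at ht; omega
            rw [Matrix.updateCol_apply, if_neg ht']
            simp only [hBdef, Matrix.of_apply, dif_pos ht]
          · have ht' : t = Fin.last m := by
              apply Fin.ext; simp only [Fin.val_last]; omega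
            rw [Matrix.updateCol_apply, if_pos ht']
            simp only [Matrix.of_apply, dif_neg ht, hv]
        rw [hupd]
        exact hΛχ (↑χ) hχ
      have hcrv : Matrix.cramer B v = B.det • (B⁻¹.mulVec v) := by
        calc Matrix.cramer B v = (B⁻¹ * B).mulVec (Matrix.cramer B v) := by
              rw [hTB, Matrix.one_mulVec]
          _ = B⁻¹.mulVec (B.mulVec (Matrix.cramer B v)) := by rw [Matrix.mulVec_mulVec]
          _ = B⁻¹.mulVec (B.det • v) := by rw [Matrix.mulVec_cramer]
          _ = B.det • (B⁻¹.mulVec v) := by rw [Matrix.mulVec_smul]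
      have hj : j = Fin.last m := by
        apply Fin.ext; simp only [Fin.val_last]
        have := j.isLt; omega
      have hsum : (∑ j' : Fin (m+1), B⁻¹ j j' * c j' χ) = (B⁻¹.mulVec v) j := rfl
      rw [hsum, hj]
      intro h0
      apply hcr
      rw [hcrv]
      simp [h0]
  · intro j j' hlt χ hχ
    by_cases h : (j' : ℕ) < m + 1 - 1
    · rw [dif_pos h] at hχ
      simp only [Set.mem_setOf_eq] at hχ
      have hsum : (∑ i : Fin (m+1), B⁻¹ j i * c i χ) = (B⁻¹ * B) j j' := by
        rw [Matrix.mul_apply]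
        refine Finset.sum_congr rfl fun i _ => ?_
        rw [hχ i, hBdef]
        simp only [Matrix.of_apply, dif_pos h]
      rw [hsum, hTB, Matrix.one_apply_ne (fun h' => absurd h' (ne_of_gt hlt))]
    · exfalso
      have h1 : (j' : ℕ) < (j : ℕ) := hlt
      have h2 : (j : ℕ) < m + 1 := j.isLt
      omega
end
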